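/- arXiv:2505.20530 — 4 statements merged into one kernel-verified Lean document; each statement's English description precedes it below -/
import Mathlib

section
/- Let γ = Σ_{n≥1} 2^{−n!} be the Liouville constant in base 2, and let p_n/q_n = Σ_{k=1}^{n} 2^{−k!} with q_n = 2^{n!}. There is a constant c > 0 such that for every rational number p/q (in lowest terms, q ≥ 1) distinct from every p_n/q_n, one has |γ − p/q| ≥ c/q³. -/
/-!
The partial sum `s_n = ∑_{k=1}^n 2^{-k!}` has denominator `2^{n!}`, so a rational `x ≠ s_n` with
denominator `q` satisfies `|x - s_n| ≥ 1 / (q 2^{n!})`, while `0 < γ - s_n < 2 / 2^{(n+1)!}`.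
Taking `n` minimal with `4q ≤ 2^{n! n}` makes the tail at most half of that gap, so
`|γ - x| ≥ 1 / (2 q 2^{n!})`; minimality of `n` gives `2^{n!} ≤ 16 q²`, whence
`|γ - x| ≥ 1 / (32 q³)`.
-/

open Finset
open scoped Nat

theorem one_div_den_mul_le_abs_sub {x s : ℚ} {z : ℤ} {D : ℕ} (hs : s * D = z) (h : x ≠ s) :
    1 / (x.den * D : ℚ) ≤ |x - s| := by
  rcases D.eq_zero_or_pos with rfl | hD
  · simp
  have hqD : (0 : ℚ) < x.den * D := by positivity
  have hint : (x - s) * (x.den * D) = ((x.num * D - z * x.den : ℤ) : ℚ) := by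
    push_cast
    rw [← hs, ← Rat.mul_den_eq_num x]
    ring
  have hne : x.num * D - z * x.den ≠ 0 := by
    intro h0
    rw [h0, Int.cast_zero, mul_eq_zero] at hint
    exact h (sub_eq_zero.mp (hint.resolve_right hqD.ne'))
  rw [div_le_iff₀ hqD, ← abs_of_pos hqD, ← abs_mul, hint]
  exact_mod_cast Int.one_le_abs hne

theorem sum_Icc_inv_pow_factorial_mul_pow_factorial (b : ℕ) (hb : b ≠ 0) (n : ℕ) :
    (∑ k ∈ Icc 1 n, (b : ℚ)⁻¹ ^ k !) * b ^ n ! =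
      ((∑ k ∈ Icc 1 n, b ^ ((n)! - k !) : ℕ) : ℚ) := by
  push_cast
  rw [sum_mul]
  refine sum_congr rfl fun k hk => ?_
  have hkn : k ! ≤ n ! := Nat.factorial_le (mem_Icc.mp hk).2
  rw [← Nat.sub_add_cancel hkn, pow_add, Nat.add_sub_cancel, mul_left_comm, ← mul_pow,
    inv_mul_cancel₀ (by exact_mod_cast hb), one_pow, mul_one]

namespace LiouvilleNumber

theorem tsum_inv_pow_factorial_succ_eq_sum_add_remainder {m : ℝ} (hm : 1 < m) (n : ℕ) :
    ∑' i : ℕ, m⁻¹ ^ (i + 1)! = ∑ k ∈ Icc 1 n, m⁻¹ ^ k ! + remainder m n := by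
  have hs : Summable fun i : ℕ => m⁻¹ ^ (i + 1)! := by
    simpa [one_div, inv_pow] using (summable_nat_add_iff 1).2 (LiouvilleNumber.summable hm)
  rw [← hs.sum_add_tsum_nat_add n, remainder, range_eq_Ico,
    sum_Ico_add' (fun k => m⁻¹ ^ k !), zero_add, Ico_add_one_right_eq_Icc]
  simp only [one_div, inv_pow, add_assoc]

theorem remainder_lt_two_div {m : ℝ} (hm : 2 ≤ m) (n : ℕ) :
    remainder m n < 2 / m ^ (n + 1)! := by
  refine (remainder_lt' n (by linarith)).trans_le ?_
  rw [← mul_one_div 2]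
  gcongr
  exact sub_one_div_inv_le_two hm

theorem remainder_le_of_four_mul_le {m q : ℝ} (hm : 2 ≤ m) (hq : 0 < q) {n : ℕ}
    (h : 4 * q * m ^ n ! ≤ m ^ (n + 1)!) : remainder m n ≤ 1 / (2 * (q * m ^ n !)) := by
  calc remainder m n ≤ 2 / m ^ (n + 1)! := (remainder_lt_two_div hm n).le
    _ ≤ 2 / (4 * q * m ^ n !) := by gcongr
    _ = 1 / (2 * (q * m ^ n !)) := by field_simp; ring

end LiouvilleNumber

theorem exists_four_mul_two_pow_factorial_le_and_two_pow_factorial_le_sq {q : ℕ} (hq : 0 < q) :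
    ∃ n, 1 ≤ n ∧ 4 * q * 2 ^ n ! ≤ 2 ^ (n + 1)! ∧ 2 ^ n ! ≤ 16 * q ^ 2 := by
  have hex : ∃ n, 4 * q ≤ 2 ^ (n ! * n) :=
    ⟨4 * q, Nat.lt_two_pow_self.le.trans
      (Nat.pow_le_pow_right two_pos (Nat.le_mul_of_pos_left _ (Nat.factorial_pos _)))⟩
  have h2 : 2 ≤ Nat.find hex :=
    (Nat.le_find_iff hex 2).2 fun k hk => by interval_cases k <;> simp <;> omega
  obtain ⟨m, hm⟩ : ∃ m, Nat.find hex = m + 2 := ⟨Nat.find hex - 2, by omega⟩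
  have hmin : 2 ^ ((m + 1)! * (m + 1)) < 4 * q := not_le.mp (Nat.find_min hex (by omega))
  refine ⟨m + 2, by omega, ?_, ?_⟩
  · rw [Nat.factorial_succ (m + 2), add_mul, one_mul, pow_add, mul_comm _ (m + 2)!]
    exact Nat.mul_le_mul_right _ (hm ▸ Nat.find_spec hex)
  calc 2 ^ (m + 2)! ≤ 2 ^ ((m + 1)! * (m + 1) * 2) := by
        gcongr
        · norm_num
        · rw [Nat.factorial_succ (m + 1)]; nlinarith [Nat.factorial_pos (m + 1)]
    _ = (2 ^ ((m + 1)! * (m + 1))) ^ 2 := pow_mul _ _ _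
    _ ≤ (4 * q) ^ 2 := by gcongr
    _ = 16 * q ^ 2 := by ring

/-- Lower bound for rational approximations to the Liouville constant
`γ = Σ 2^{-n!}` by rationals other than the partial sums: `|γ - p/q| ≥ c/q³`. -/
theorem liouville_constant_lower_bound :
    ∃ c > (0 : ℝ), ∀ x : ℚ,
      (∀ n : ℕ, 1 ≤ n → x ≠ ∑ k ∈ Finset.Icc 1 n, (2 : ℚ)⁻¹ ^ Nat.factorial k) →
      |(∑' n : ℕ, (2 : ℝ)⁻¹ ^ Nat.factorial (n + 1)) - (x : ℝ)| ≥ c / (x.den : ℝ) ^ 3 := by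
  refine ⟨1 / 32, by norm_num, fun x hx => ?_⟩
  obtain ⟨n, hn, hgrow, hsmall⟩ :=
    exists_four_mul_two_pow_factorial_le_and_two_pow_factorial_le_sq x.den_pos
  have hq : (0 : ℝ) < x.den := by positivity
  replace hgrow : 4 * (x.den : ℝ) * 2 ^ n ! ≤ 2 ^ (n + 1)! := by exact_mod_cast hgrow
  replace hsmall : (2 : ℝ) ^ n ! ≤ 16 * (x.den : ℝ) ^ 2 := by exact_mod_cast hsmall
  have hs : (∑ k ∈ Icc 1 n, (2 : ℚ)⁻¹ ^ k !) * (2 ^ n ! : ℕ) =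
      ((∑ k ∈ Icc 1 n, 2 ^ ((n)! - k !) : ℕ) : ℤ) := by
    exact_mod_cast sum_Icc_inv_pow_factorial_mul_pow_factorial 2 two_ne_zero n
  have hgap := (Rat.cast_le (K := ℝ)).mpr (one_div_den_mul_le_abs_sub hs (hx n hn))
  rw [LiouvilleNumber.tsum_inv_pow_factorial_succ_eq_sum_add_remainder one_lt_two n]
  push_cast at hgap ⊢
  set s : ℝ := ∑ k ∈ Icc 1 n, (2 : ℝ)⁻¹ ^ (k !)
  set r : ℝ := LiouvilleNumber.remainder 2 n
  have hr : 0 < r := LiouvilleNumber.remainder_pos one_lt_two n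
  have htail : r ≤ 1 / (2 * (x.den * 2 ^ n !)) :=
    LiouvilleNumber.remainder_le_of_four_mul_le le_rfl hq hgrow
  have htri := abs_sub_le (x : ℝ) (s + r) s
  rw [add_sub_cancel_left, abs_of_pos hr, abs_sub_comm (x : ℝ) (s + r)] at htri
  calc 1 / 32 / (x.den : ℝ) ^ 3 ≤ 1 / (2 * (x.den * 2 ^ n !)) := by
        rw [div_le_div_iff₀ (by positivity) (by positivity)]
        nlinarith [mul_le_mul_of_nonneg_left hsmall hq.le]
    _ ≤ |s + r - x| := by
      have : 1 / ((x.den : ℝ) * 2 ^ n !) = 2 * (1 / (2 * (x.den * 2 ^ n !))) := by field_simp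
      linarith
end

section
/- Let K be a field of characteristic 0, α ∈ K, and m a positive integer. Suppose α^{1/m} (a fixed m-th root of α in an algebraic closure) has degree m over K, and suppose every root of unity contained in K(α^{1/m}) already lies in K. Then every intermediate field L with K ⊆ L ⊆ K(α^{1/m}) is of the form K(α^{1/d}) for some divisor d of m, where α^{1/d} := (α^{1/m})^{m/d}. -/
/-!
Let `E = K(r)` with `r ^ m = a`, and let `K ⊆ L ⊆ E` with `e = [E : L]`. The norm `N` of `r`
from `E` to `L` satisfies `N ^ m = a ^ e = (r ^ e) ^ m`, so `N / r ^ e` is a root of unity in `E`,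
hence lies in `K`; therefore `r ^ e ∈ L`. Over `M = K(r ^ e) ⊆ L` the element `r` has degree at
most `e = [E : L]`, which forces `M = L`; and `e ∣ m = [E : K]`, so `L = K(r ^ (m / d))` for
`d = m / e`.
-/

open Module Polynomial IntermediateField

namespace IntermediateField

variable {F Ω : Type*} [Field F] [Field Ω] [Algebra F Ω]

theorem pow_finrank_adjoin_simple_mem_range {x : Ω} {m : ℕ} {b : F} (hm : m ≠ 0)
    (hx : x ^ m = algebraMap F Ω b)
    (hroots : ∀ ζ : Ω, ζ ^ m = 1 → ζ ∈ F⟮x⟯ → ζ ∈ (algebraMap F Ω).range) :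
    x ^ finrank F F⟮x⟯ ∈ (algebraMap F Ω).range := by
  set e := finrank F F⟮x⟯
  rcases eq_or_ne x 0 with rfl | hx0
  · rcases eq_or_ne e 0 with he | he <;> simp [he]
  set N := Algebra.norm F (AdjoinSimple.gen F x)
  have hnorm : N ^ m = b ^ e := by
    rw [← map_pow, show AdjoinSimple.gen F x ^ m = algebraMap F F⟮x⟯ b from Subtype.ext hx,
      Algebra.norm_algebraMap]
  set ζ := algebraMap F Ω N / x ^ e
  have hζ : ζ ^ m = 1 := by
    rw [div_pow, ← map_pow, hnorm, map_pow, ← hx, ← pow_mul, ← pow_mul, mul_comm,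
      div_self (pow_ne_zero _ hx0)]
  have hζx : ζ ∈ F⟮x⟯ :=
    div_mem (algebraMap_mem _ N) (pow_mem (mem_adjoin_simple_self F x) e)
  obtain ⟨c, hc⟩ := hroots ζ hζ hζx
  have hζ0 : ζ ≠ 0 := by rintro h; simp [h, hm] at hζ
  refine ⟨N / c, ?_⟩
  rw [map_div₀, hc, div_eq_iff hζ0, mul_div_cancel₀ _ (pow_ne_zero _ hx0)]

theorem finrank_adjoin_simple_le_of_pow_mem {x : Ω} {n : ℕ} (hn : n ≠ 0)
    (hx : x ^ n ∈ (algebraMap F Ω).range) : finrank F F⟮x⟯ ≤ n := by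
  obtain ⟨c, hc⟩ := hx
  have hroot : aeval x (X ^ n - C c) = 0 := by simp [hc]
  have hne : (X ^ n - C c : F[X]) ≠ 0 := (monic_X_pow_sub_C c hn).ne_zero
  rw [adjoin.finrank ⟨_, monic_X_pow_sub_C c hn, hroot⟩]
  calc (minpoly F x).natDegree ≤ (X ^ n - C c).natDegree :=
        natDegree_le_of_dvd (minpoly.dvd F x hroot) hne
    _ = n := natDegree_X_pow_sub_C

theorem relfinrank_adjoin_simple_eq_finrank {L : IntermediateField F Ω} {x : Ω}
    (hL : L ≤ F⟮x⟯) : relfinrank L F⟮x⟯ = finrank L L⟮x⟯ := by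
  rw [relfinrank_eq_finrank_of_le hL, extendScalars_adjoin hL]

theorem eq_of_le_of_relfinrank_le {M L N : IntermediateField F Ω} (hML : M ≤ L) (hLN : L ≤ N)
    (hMN : relfinrank M N ≠ 0) (hle : relfinrank M N ≤ relfinrank L N) : M = L := by
  have htower := relfinrank_mul_relfinrank hML hLN
  have hML0 : relfinrank M L ≠ 0 := by rintro h; simp [h] at htower; exact hMN htower.symm
  have hLN0 : relfinrank L N ≠ 0 := by rintro h; simp [h] at htower; exact hMN htower.symm
  have hML1 : relfinrank M L ≤ 1 := by
    refine Nat.le_of_mul_le_mul_right ?_ (Nat.pos_of_ne_zero hLN0)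
    rwa [htower, one_mul]
  replace hML1 : relfinrank M L = 1 := by omega
  exact le_antisymm hML (relfinrank_eq_one_iff.mp hML1)

end IntermediateField

theorem intermediate_fields_of_radical_general {K : Type*} [Field K]
    (a : K) (m : ℕ) (hm : 0 < m) (r : AlgebraicClosure K)
    (hr : r ^ m = algebraMap K (AlgebraicClosure K) a)
    (hdeg : Module.finrank K (IntermediateField.adjoin K ({r} : Set (AlgebraicClosure K))) = m)
    (hroots : ∀ ζ : AlgebraicClosure K, (∃ k : ℕ, 0 < k ∧ ζ ^ k = 1) →
      ζ ∈ IntermediateField.adjoin K ({r} : Set (AlgebraicClosure K)) →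
      ζ ∈ (algebraMap K (AlgebraicClosure K)).range)
    (L : IntermediateField K (AlgebraicClosure K))
    (hL : L ≤ IntermediateField.adjoin K ({r} : Set (AlgebraicClosure K))) :
    ∃ d : ℕ, d ∣ m ∧
      L = IntermediateField.adjoin K ({r ^ (m / d)} : Set (AlgebraicClosure K)) := by
  have hint : IsIntegral K r := Algebra.IsIntegral.isIntegral r
  set e := finrank L L⟮r⟯
  have hLE : relfinrank L K⟮r⟯ = e := relfinrank_adjoin_simple_eq_finrank hL
  have hpos (F : IntermediateField K (AlgebraicClosure K)) : finrank F F⟮r⟯ ≠ 0 := by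
    rw [adjoin.finrank hint.tower_top]
    exact (minpoly.natDegree_pos hint.tower_top).ne'
  have hre : r ^ e ∈ L := by
    have hrL : r ^ m = algebraMap L _ (algebraMap K L a) := by
      rw [← IsScalarTower.algebraMap_apply, hr]
    obtain ⟨c, hc⟩ := pow_finrank_adjoin_simple_mem_range hm.ne' hrL fun ζ hζ hζL => by
      rw [← extendScalars_adjoin hL] at hζL
      obtain ⟨k, rfl⟩ := hroots ζ ⟨m, hm, hζ⟩ hζL
      exact ⟨algebraMap K L k, (IsScalarTower.algebraMap_apply _ _ _ k).symm⟩
    exact hc ▸ c.2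
  have hML : K⟮r ^ e⟯ ≤ L := adjoin_simple_le_iff.mpr hre
  have hM : K⟮r ^ e⟯ = L := by
    have hME := hML.trans hL
    refine eq_of_le_of_relfinrank_le hML hL ?_ ?_ <;> rw [relfinrank_adjoin_simple_eq_finrank hME]
    · exact hpos _
    · exact (finrank_adjoin_simple_le_of_pow_mem (hpos L)
        ⟨⟨r ^ e, mem_adjoin_simple_self K _⟩, rfl⟩).trans hLE.ge
  have he : e ∣ m := hLE ▸ hdeg ▸ relfinrank_dvd_finrank_bot L K⟮r⟯
  exact ⟨m / e, Nat.div_dvd_of_dvd he, by rw [Nat.div_div_self he hm.ne', hM]⟩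

/-- Intermediate fields of a radical extension `K(α^{1/m})/K` containing no new
roots of unity are of the form `K(α^{1/d})` for `d ∣ m`. -/
theorem intermediate_fields_of_radical {K : Type*} [Field K] [CharZero K]
    (a : K) (m : ℕ) (hm : 0 < m) (r : AlgebraicClosure K)
    (hr : r ^ m = algebraMap K (AlgebraicClosure K) a)
    (hdeg : Module.finrank K (IntermediateField.adjoin K ({r} : Set (AlgebraicClosure K))) = m)
    (hroots : ∀ ζ : AlgebraicClosure K, (∃ k : ℕ, 0 < k ∧ ζ ^ k = 1) →
      ζ ∈ IntermediateField.adjoin K ({r} : Set (AlgebraicClosure K)) →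
      ζ ∈ (algebraMap K (AlgebraicClosure K)).range)
    (L : IntermediateField K (AlgebraicClosure K))
    (hL : L ≤ IntermediateField.adjoin K ({r} : Set (AlgebraicClosure K))) :
    ∃ d : ℕ, d ∣ m ∧
      L = IntermediateField.adjoin K ({r ^ (m / d)} : Set (AlgebraicClosure K)) :=
  intermediate_fields_of_radical_general a m hm r hr hdeg hroots L hL
end

section
/- Let m ≥ 1 and let α be a positive rational number with 0 < α < 1 that is not a p-th power in ℚ for any prime p dividing m. Fix a real m-th root α^{1/m}. Then the algebraic number β = Σ_{k=1}^{m-1} (α^{1/m})^{k!} has degree exactly m over ℚ. -/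
/-!
Because `α > 0` is not a `p`-th power for any prime `p ∣ m`, the polynomial `X ^ m - α` is
irreducible (going up one prime at a time, a `p`-th root of the previous radical would have a
norm whose `p`-th power is `±α`), so `r` has degree `m` over `ℚ`. Let `K = ℚ(β) ⊆ ℚ(r)` and
`d = [ℚ(r) : K]`. All conjugates of `r` over `K` have absolute value `|r|`, so the constant term
of its minimal polynomial is `±r ^ d`; hence `r ^ d ∈ K`, and comparing degrees gives
`K = ℚ(r ^ d)` with `d ∣ m`. In the basis `1, r, …, r ^ (m - 1)` the elements of `ℚ(r ^ d)` only
involve exponents divisible by `d`, whereas `β` has a positive coefficient on `r = r ^ 1!`.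
Hence `d = 1` and `[ℚ(β) : ℚ] = m`.
-/

open Polynomial IntermediateField

theorem X_pow_sub_C_irreducible_of_pos {K : Type*} [Field K] [LinearOrder K]
    [IsStrictOrderedRing K] {n : ℕ} (hn : n ≠ 0) {a : K} (ha : 0 < a)
    (hpow : ∀ p : ℕ, p.Prime → p ∣ n → ∀ b : K, b ^ p ≠ a) :
    Irreducible (X ^ n - C a) := by
  induction n using induction_on_primes with
  | zero => contradiction
  | one => simpa using irreducible_X_sub_C a
  | prime_mul p n hp IH =>
    have hn0 : n ≠ 0 := right_ne_zero_of_mul hn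
    refine X_pow_mul_sub_C_irreducible
      (IH hn0 fun q hq hqn ↦ hpow q hq (dvd_mul_of_dvd_right hqn p)) fun E _ _ x hx ↦ ?_
    have hint : IsIntegral K x :=
      minpoly.ne_zero_iff.mp (hx ▸ (monic_X_pow_sub_C a hn0).ne_zero)
    refine X_pow_sub_C_irreducible_of_prime hp fun b hb ↦ ?_
    have hnorm : Algebra.norm K b ^ p = (-1) ^ n * -a := by
      rw [← map_pow, hb, ← adjoin.powerBasis_gen hint,
        Algebra.PowerBasis.norm_gen_eq_coeff_zero_minpoly]
      simp [minpoly_gen, hx, hn0.symm]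
    rcases n.even_or_odd with hn2 | hn2
    · rw [hn2.neg_one_pow, one_mul] at hnorm
      rcases hp.eq_two_or_odd' with rfl | hpodd
      · nlinarith [sq_nonneg (Algebra.norm K b)]
      · exact hpow p hp (dvd_mul_right p n) (-Algebra.norm K b)
          (by rw [hpodd.neg_pow, hnorm, neg_neg])
    · rw [hn2.neg_one_pow, neg_one_mul, neg_neg] at hnorm
      exact hpow p hp (dvd_mul_right p n) _ hnorm

theorem minpoly_eq_X_pow_sub_C_of_pos {K L : Type*} [Field K] [LinearOrder K]
    [IsStrictOrderedRing K] [Ring L] [Nontrivial L] [Algebra K L] {n : ℕ} (hn : n ≠ 0) {a : K}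
    (ha : 0 < a) (hpow : ∀ p : ℕ, p.Prime → p ∣ n → ∀ b : K, b ^ p ≠ a) {x : L}
    (hx : x ^ n = algebraMap K L a) : minpoly K x = X ^ n - C a :=
  (minpoly.eq_of_irreducible_of_monic (X_pow_sub_C_irreducible_of_pos hn ha hpow)
    (by simp [hx]) (monic_X_pow_sub_C a hn)).symm

theorem Polynomial.coeff_zero_pow_of_dvd_X_pow_sub_C {F : Type*} [Field F] [IsAlgClosed F]
    {g : F[X]} (hg : g.Monic) {n : ℕ} {c : F} (h : g ∣ X ^ n - C c) :
    g.coeff 0 ^ n = (-1) ^ (g.natDegree * n) * c ^ g.natDegree := by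
  have hsplit : g.Splits := IsAlgClosed.splits g
  have hroots : ∀ z ∈ g.roots, z ^ n = c := fun z hz ↦ by
    simpa [sub_eq_zero] using eval_eq_zero_of_dvd_of_eval_eq_zero h (isRoot_of_mem_roots hz)
  have hprod : g.roots.prod ^ n = c ^ g.natDegree := by
    rw [← Multiset.map_id' g.roots, ← Multiset.prod_map_pow, Multiset.map_congr rfl hroots,
      Multiset.map_const', Multiset.prod_replicate, splits_iff_card_roots.mp hsplit]
  rw [hsplit.coeff_zero_eq_prod_roots_of_monic hg, mul_pow, ← pow_mul, hprod]

theorem pow_natDegree_minpoly_mem_range {K : Type*} [Field K] [Algebra K ℝ] {n : ℕ}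
    (hn : n ≠ 0) {r : ℝ} {a : K} (hr : r ^ n = algebraMap K ℝ a) :
    r ^ (minpoly K r).natDegree ∈ (algebraMap K ℝ).range := by
  set d := (minpoly K r).natDegree
  have hint : IsIntegral K r := .of_pow (Nat.pos_of_ne_zero hn) (hr ▸ isIntegral_algebraMap)
  let φ : K →+* ℂ := Complex.ofRealHom.comp (algebraMap K ℝ)
  have hdvd : (minpoly K r).map φ ∣ X ^ n - C ((r : ℂ) ^ n) := by
    have := Polynomial.map_dvd φ (minpoly.dvd K r (p := X ^ n - C a) (by simp [hr]))
    rwa [Polynomial.map_sub, Polynomial.map_pow, map_X, map_C,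
      show φ a = (r : ℂ) ^ n by simp [φ, ← hr]] at this
  have key := coeff_zero_pow_of_dvd_X_pow_sub_C ((minpoly.monic hint).map φ) hdvd
  rw [(minpoly.monic hint).natDegree_map, coeff_map] at key
  set t := algebraMap K ℝ ((minpoly K r).coeff 0)
  have habs : |t| = |r ^ d| := by
    have := congrArg norm key
    simp only [norm_pow, norm_mul, norm_neg, norm_one, one_pow, one_mul, φ,
      RingHom.comp_apply, Complex.ofRealHom_eq_coe, Complex.norm_real, Real.norm_eq_abs] at this
    rw [← pow_mul, mul_comm n d, pow_mul] at this
    rw [abs_pow]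
    exact (pow_left_inj₀ (abs_nonneg _) (by positivity) hn).mp this
  rcases abs_eq_abs.mp habs with h | h
  · exact ⟨_, h⟩
  · exact ⟨-(minpoly K r).coeff 0, by rw [map_neg, ← neg_eq_iff_eq_neg.mpr h]⟩

theorem IntermediateField.finiteDimensional_of_le {F L : Type*} [Field F] [Field L]
    [Algebra F L] {K E : IntermediateField F L} [FiniteDimensional F E] (h : K ≤ E) :
    FiniteDimensional F K :=
  Submodule.finiteDimensional_of_le (S₁ := K.toSubalgebra.toSubmodule)
    (S₂ := E.toSubalgebra.toSubmodule) h

theorem IntermediateField.finrank_mul_natDegree_minpoly {F L : Type*} [Field F] [Field L]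
    [Algebra F L] {x : L} (hx : IsIntegral F x) {K : IntermediateField F L} (hK : K ≤ F⟮x⟯) :
    Module.finrank F K * (minpoly K x).natDegree = (minpoly F x).natDegree := by
  have : FiniteDimensional F F⟮x⟯ := adjoin.finiteDimensional hx
  have : FiniteDimensional F K := finiteDimensional_of_le hK
  have hxK : IsIntegral K x := hx.tower_top
  have : FiniteDimensional K K⟮x⟯ := adjoin.finiteDimensional hxK
  have hres : restrictScalars F K⟮x⟯ = F⟮x⟯ :=
    (restrictScalars_adjoin_eq_sup F K {x}).trans (sup_eq_right.mpr hK)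
  rw [← adjoin.finrank hxK, ← adjoin.finrank hx, ← hres]
  have : Module.Free K K⟮x⟯ := Module.Free.of_divisionRing K K⟮x⟯
  exact Module.finrank_mul_finrank F K K⟮x⟯

theorem IntermediateField.eq_adjoin_pow_of_le_adjoin_radical {F : Type*} [Field F]
    [LinearOrder F] [IsStrictOrderedRing F] [Algebra F ℝ] {n : ℕ} (hn : n ≠ 0) {a : F}
    (ha : 0 < a) (hpow : ∀ p : ℕ, p.Prime → p ∣ n → ∀ b : F, b ^ p ≠ a) {r : ℝ}
    (hr : r ^ n = algebraMap F ℝ a) {K : IntermediateField F ℝ} (hK : K ≤ F⟮r⟯) :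
    K = F⟮r ^ (minpoly K r).natDegree⟯ := by
  set d := (minpoly K r).natDegree
  set e := Module.finrank F K
  have hrint : IsIntegral F r := .of_pow (Nat.pos_of_ne_zero hn) (hr ▸ isIntegral_algebraMap)
  have hed : e * d = n := by
    rw [finrank_mul_natDegree_minpoly hrint hK, minpoly_eq_X_pow_sub_C_of_pos hn ha hpow hr,
      natDegree_X_pow_sub_C]
  have : FiniteDimensional F F⟮r⟯ := adjoin.finiteDimensional hrint
  have : FiniteDimensional F K := finiteDimensional_of_le hK
  have hrdK : r ^ d ∈ K := by
    obtain ⟨u, hu⟩ := pow_natDegree_minpoly_mem_range (K := K) hn (a := algebraMap F K a) hr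
    exact hu ▸ u.2
  have hrde : (r ^ d) ^ e = algebraMap F ℝ a := by rw [← pow_mul, mul_comm, hed, hr]
  have he : e ≠ 0 := Module.finrank_pos.ne'
  refine (eq_of_le_of_finrank_eq (adjoin_simple_le_iff.mpr hrdK) ?_).symm
  rw [adjoin.finrank (hrint.pow d), minpoly_eq_X_pow_sub_C_of_pos he ha
    (fun p hp hpe ↦ hpow p hp (hpe.trans (Dvd.intro d hed))) hrde, natDegree_X_pow_sub_C]

theorem eq_of_sum_range_smul_pow_eq {K A : Type*} [Field K] [Ring A] [Algebra K A] {x : A}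
    {n : ℕ} (hdeg : (minpoly K x).natDegree = n) {c c' : ℕ → K}
    (h : ∑ s ∈ Finset.range n, c s • x ^ s = ∑ s ∈ Finset.range n, c' s • x ^ s) {s : ℕ}
    (hs : s < n) : c s = c' s := by
  subst hdeg
  exact Fintype.linearIndependent_iffₛ.mp (linearIndependent_pow x) (fun i ↦ c i) (fun i ↦ c' i)
    (by simpa only [Fin.sum_univ_eq_sum_range (fun i ↦ c i • x ^ i),
      Fin.sum_univ_eq_sum_range (fun i ↦ c' i • x ^ i)] using h) ⟨s, hs⟩

section radicalCoeff

variable {R A ι : Type*} [CommSemiring R] [Semiring A] [Algebra R A] {n : ℕ} {a : R}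

/-- The coefficient of `x ^ s`, `s < n`, in `∑ i ∈ S, w i • x ^ e i` once `x ^ n` is replaced
by `a`. -/
def radicalCoeff (n : ℕ) (a : R) (S : Finset ι) (w : ι → R) (e : ι → ℕ) (s : ℕ) : R :=
  ∑ i ∈ S with e i % n = s, w i * a ^ (e i / n)

theorem sum_smul_pow_eq_sum_radicalCoeff (hn : n ≠ 0) {x : A} (hx : x ^ n = algebraMap R A a)
    (S : Finset ι) (w : ι → R) (e : ι → ℕ) :
    ∑ i ∈ S, w i • x ^ e i = ∑ s ∈ Finset.range n, radicalCoeff n a S w e s • x ^ s := by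
  have hreduce (k : ℕ) : x ^ k = a ^ (k / n) • x ^ (k % n) := by
    conv_lhs => rw [← Nat.div_add_mod k n]
    rw [pow_add, pow_mul, hx, ← map_pow, Algebra.smul_def]
  rw [← Finset.sum_fiberwise_of_maps_to (g := fun i ↦ e i % n) (t := Finset.range n)
    fun i _ ↦ Finset.mem_range.mpr (Nat.mod_lt _ (Nat.pos_of_ne_zero hn))]
  refine Finset.sum_congr rfl fun s _ ↦ ?_
  rw [radicalCoeff, Finset.sum_smul]
  refine Finset.sum_congr rfl fun i hi ↦ ?_
  rw [hreduce, smul_smul, (Finset.mem_filter.mp hi).2]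

theorem radicalCoeff_eq_zero_of_dvd {S : Finset ι} {w : ι → R} {e : ι → ℕ} {d s : ℕ}
    (hd : d ∣ n) (he : ∀ i ∈ S, d ∣ e i) (hs : ¬d ∣ s) : radicalCoeff n a S w e s = 0 :=
  Finset.sum_eq_zero fun i hi ↦ by
    obtain ⟨hiS, his⟩ := Finset.mem_filter.mp hi
    exact absurd (his ▸ (Nat.dvd_mod_iff hd).mpr (he i hiS)) hs

end radicalCoeff

theorem sum_pow_notMem_adjoin_pow {F A ι : Type*} [Field F] [LinearOrder F]
    [IsStrictOrderedRing F] [Ring A] [Algebra F A] {n : ℕ} (hn : n ≠ 0) {a : F} (ha : 0 < a)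
    {x : A} (hdeg : (minpoly F x).natDegree = n) (hx : x ^ n = algebraMap F A a) {d : ℕ}
    (hd : d ∣ n) {S : Finset ι} {e : ι → ℕ} {i₀ : ι} (hi₀ : i₀ ∈ S) (hdi₀ : ¬d ∣ e i₀) :
    ∑ i ∈ S, x ^ e i ∉ Algebra.adjoin F {x ^ d} := by
  rw [Algebra.adjoin_singleton_eq_range_aeval]
  rintro ⟨q, hq⟩
  have hexpand : ∑ i ∈ S, (1 : F) • x ^ e i =
      ∑ t ∈ Finset.range (q.natDegree + 1), q.coeff t • x ^ (d * t) := by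
    simp only [one_smul, pow_mul, ← hq, AlgHom.toRingHom_eq_coe, RingHom.coe_coe,
      aeval_eq_sum_range]
  rw [sum_smul_pow_eq_sum_radicalCoeff hn hx S,
    sum_smul_pow_eq_sum_radicalCoeff hn hx _ _ (d * ·)] at hexpand
  have hs : e i₀ % n < n := Nat.mod_lt _ (Nat.pos_of_ne_zero hn)
  have hcoeff := eq_of_sum_range_smul_pow_eq hdeg hexpand hs
  rw [radicalCoeff_eq_zero_of_dvd hd (fun t _ ↦ dvd_mul_right d t)
    (by rwa [Nat.dvd_mod_iff hd])] at hcoeff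
  refine hcoeff.not_gt (Finset.sum_pos (fun i _ ↦ by positivity) ⟨i₀, ?_⟩)
  exact Finset.mem_filter.mpr ⟨hi₀, rfl⟩

theorem degree_sum_radical_factorials_general (m : ℕ) (hm : 1 ≤ m) (α : ℚ)
    (h0 : 0 < α)
    (hpow : ∀ p : ℕ, p.Prime → p ∣ m → ¬∃ b : ℚ, b ^ p = α)
    (r : ℝ) (hr : r ^ m = (α : ℝ)) :
    (minpoly ℚ (∑ k ∈ Finset.Icc 1 (m - 1), r ^ Nat.factorial k)).natDegree = m := by
  set β := ∑ k ∈ Finset.Icc 1 (m - 1), r ^ Nat.factorial k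
  have hm0 : m ≠ 0 := Nat.one_le_iff_ne_zero.mp hm
  have hpow' (p : ℕ) (hp : p.Prime) (hpm : p ∣ m) (b : ℚ) : b ^ p ≠ α := fun hb ↦
    hpow p hp hpm ⟨b, hb⟩
  have hrα : r ^ m = algebraMap ℚ ℝ α := by rw [hr, eq_ratCast]
  have hrdeg : (minpoly ℚ r).natDegree = m := by
    rw [minpoly_eq_X_pow_sub_C_of_pos hm0 h0 hpow' hrα, natDegree_X_pow_sub_C]
  have hrint : IsIntegral ℚ r := .of_pow (Nat.pos_of_ne_zero hm0) (hrα ▸ isIntegral_algebraMap)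
  have hβK : ℚ⟮β⟯ ≤ ℚ⟮r⟯ := adjoin_simple_le_iff.mpr
    (sum_mem fun k _ ↦ pow_mem (mem_adjoin_simple_self ℚ r) _)
  set d := (minpoly ℚ⟮β⟯ r).natDegree
  have hdm : Module.finrank ℚ ℚ⟮β⟯ * d = m := hrdeg ▸ finrank_mul_natDegree_minpoly hrint hβK
  have hd : d = 1 := by
    by_contra hd1
    have hdvd : d ∣ m := Dvd.intro_left _ hdm
    have hm2 : 2 ≤ m := by
      have := minpoly.natDegree_pos (hrint.tower_top (A := ℚ⟮β⟯))
      have := Nat.le_of_dvd (Nat.pos_of_ne_zero hm0) hdvd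
      omega
    have hβ : β ∈ Algebra.adjoin ℚ {r ^ d} := by
      rw [← adjoin_simple_toSubalgebra_of_isAlgebraic (hrint.pow d).isAlgebraic,
        ← eq_adjoin_pow_of_le_adjoin_radical hm0 h0 hpow' hrα hβK]
      exact mem_adjoin_simple_self ℚ β
    refine sum_pow_notMem_adjoin_pow hm0 h0 hrdeg hrα hdvd (i₀ := 1) ?_ ?_ hβ
    · exact Finset.mem_Icc.mpr ⟨le_rfl, by omega⟩
    · rwa [Nat.factorial_one, Nat.dvd_one]
  have hβint : IsIntegral ℚ β := IsIntegral.sum _ fun k _ ↦ hrint.pow _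
  rw [← adjoin.finrank hβint, ← hdm, hd, mul_one]

/-- If `0 < α < 1` is rational and not a `p`-th power for any prime `p ∣ m`,
and `r` is a real `m`-th root of `α`, then `β = Σ_{k=1}^{m-1} r^{k!}` has degree
exactly `m` over `ℚ`. -/
theorem degree_sum_radical_factorials (m : ℕ) (hm : 1 ≤ m) (α : ℚ)
    (h0 : 0 < α) (h1 : α < 1)
    (hpow : ∀ p : ℕ, p.Prime → p ∣ m → ¬∃ b : ℚ, b ^ p = α)
    (r : ℝ) (hr : r ^ m = (α : ℝ)) :
    (minpoly ℚ (∑ k ∈ Finset.Icc 1 (m - 1), r ^ Nat.factorial k)).natDegree = m :=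
  degree_sum_radical_factorials_general m hm α h0 hpow r hr
end

section
/- Let γ be a complex number and suppose there exist sequences of algebraic numbers β_n of fixed degree m, pairwise distinct, with |γ − β_n| ≤ e^{−w_n·H(β_n)} where w_n → ∞ and H(β_n) → ∞; and suppose there exist c > 0, η > 0 such that |γ − β| ≥ c·e^{−η·H(β)} for every algebraic β of degree < m. Then γ is transcendental. -/
open Polynomial NumberField IntermediateField
open scoped Classical

noncomputable section


/-- `dᵥ · log⁺ |x|ᵥ` for a finite place `v` of a number field `K`. -/
def finLogPlus {K : Type*} [Field K] [NumberField K]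
    (v : IsDedekindDomain.HeightOneSpectrum (𝓞 K)) (x : K) : ℝ :=
  if h : v.valuation K x = 0 then 0
  else max 0 ((Multiplicative.toAdd (WithZero.unzero h) : ℤ) *
    Real.log (Ideal.absNorm v.asIdeal))

/-- The absolute logarithmic Weil height of an element of a number field, defined
as `(1/[K:ℚ]) Σ_v dᵥ log⁺ |x|ᵥ`, the archimedean part being indexed by the
embeddings `K →+* ℂ`. -/
def heightK {K : Type*} [Field K] [NumberField K] (x : K) : ℝ :=
  (Module.finrank ℚ K : ℝ)⁻¹ *
    ((∑ σ : K →+* ℂ, max 0 (Real.log (‖σ x‖))) +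
      ∑ᶠ v : IsDedekindDomain.HeightOneSpectrum (𝓞 K), finLogPlus v x)

/-- The absolute logarithmic Weil height of a complex algebraic number. -/
def height (α : ℂ) : ℝ :=
  if h : IsAlgebraic ℚ α then
    letI K := IntermediateField.adjoin ℚ ({α} : Set ℂ)
    haveI : FiniteDimensional ℚ K := IntermediateField.adjoin.finiteDimensional h.isIntegral
    haveI : NumberField K := ⟨⟩
    heightK (⟨α, IntermediateField.mem_adjoin_simple_self ℚ α⟩ : K)
  else 0

/-!
If `γ` were algebraic, pick `P ∈ ℤ[X]` of degree `d` with `P(γ) = 0`. For an algebraic `β` of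
degree `m` with `P(β) ≠ 0`, the number `z = P(β) ∈ ℚ(β)` has unnormalised logarithmic height
`h_{ℚ(β)}(z) ≤ m (c_P + d (d + 1) h(β))` with `c_P` depending only on `P`, and the product
formula gives `|z| ≥ e^{-h_{ℚ(β)}(z)}` at every archimedean place. As `P` is Lipschitz near `γ`,
this yields Liouville's inequality `|γ - β| ≥ e^{-C} e^{-m (c_P + d (d + 1) h(β))}`, which the
approximations `β_n` violate once `w_n > m d (d + 1)` and `h(β_n)` is large; only finitely many
`β_n` are roots of `P`.
-/

open Real Height Filter Topology

namespace NumberField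

variable {K : Type*} [Field K] [NumberField K]

open IsDedekindDomain WithZeroMulInt in
lemma finLogPlus_eq_posLog (v : HeightOneSpectrum (𝓞 K)) (x : K) :
    finLogPlus v x = log⁺ (FinitePlace.mk v x) := by
  rw [finLogPlus, FinitePlace.mk_apply, FinitePlace.norm_embedding']
  split_ifs with h
  · simp [h]
  · rw [toNNReal_neg_apply _ h, posLog_apply, NNReal.coe_zpow, log_zpow]
    rfl

lemma sum_embeddings_eq_sum_infinitePlace (f : ℝ → ℝ) (x : K) :
    ∑ σ : K →+* ℂ, f ‖σ x‖ = ∑ w : InfinitePlace K, w.mult * f (w x) := by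
  classical
  rw [← Finset.sum_fiberwise Finset.univ InfinitePlace.mk]
  refine Finset.sum_congr rfl fun w _ => ?_
  rw [← InfinitePlace.card_filter_mk_eq w, ← nsmul_eq_mul, ← Finset.sum_const]
  refine Finset.sum_congr rfl fun σ hσ => ?_
  rw [← (Finset.mem_filter.mp hσ).2, InfinitePlace.apply]

lemma heightK_eq_logHeight₁_div_finrank (x : K) :
    heightK x = logHeight₁ x / Module.finrank ℚ K := by
  rw [heightK, logHeight₁_eq, sum_embeddings_eq_sum_infinitePlace (fun t => max 0 (log t)),
    ← finsum_comp_equiv (FinitePlace.equivHeightOneSpectrum (K := K)).symm, inv_mul_eq_div]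
  simp only [finLogPlus_eq_posLog, posLog_apply]
  rfl

namespace InfinitePlace

lemma posLog_le_logHeight₁ (w : InfinitePlace K) (x : K) : log⁺ (w x) ≤ logHeight₁ x := by
  rw [logHeight₁_eq]
  calc log⁺ (w x) ≤ w.mult * log⁺ (w x) := le_mul_of_one_le_left posLog_nonneg one_le_mult
    _ ≤ ∑ v : InfinitePlace K, v.mult * log⁺ (v x) :=
      Finset.single_le_sum (f := fun v : InfinitePlace K => (v.mult : ℝ) * log⁺ (v x))
        (fun v _ => mul_nonneg (Nat.cast_nonneg _) posLog_nonneg) (Finset.mem_univ w)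
    _ ≤ _ := le_add_of_nonneg_right (finsum_nonneg fun _ => posLog_nonneg)

/-- The product formula enters through `logHeight₁ x⁻¹ = logHeight₁ x`. -/
lemma exp_neg_logHeight₁_le (w : InfinitePlace K) {x : K} (hx : x ≠ 0) :
    exp (-logHeight₁ x) ≤ w x := by
  rw [← exp_log (w.pos_iff.mpr hx), exp_le_exp, neg_le, ← log_inv, ← map_inv₀,
    ← logHeight₁_inv]
  exact (le_max_right _ _).trans (posLog_le_logHeight₁ w x⁻¹)

end InfinitePlace

end NumberField

open IntermediateField in
lemma height_eq_logHeight₁_div_finrank {α : ℂ} (hα : IsAlgebraic ℚ α) [NumberField ℚ⟮α⟯] :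
    height α = logHeight₁ (AdjoinSimple.gen ℚ α) / Module.finrank ℚ ℚ⟮α⟯ := by
  rw [height, dif_pos hα]
  exact NumberField.heightK_eq_logHeight₁_div_finrank _

namespace Polynomial

def liouvilleConst (P : ℤ[X]) : ℝ :=
  log (P.natDegree + 1) + ∑ i ∈ Finset.range (P.natDegree + 1), log |P.coeff i|

lemma eventually_aeval_ne_zero {R A : Type*} [CommRing R] [IsDomain R] [CommRing A] [IsDomain A]
    [Algebra R A] [Module.IsTorsionFree R A] {P : R[X]} (hP : P ≠ 0) {β : ℕ → A}
    (hβ : Function.Injective β) : ∀ᶠ n in atTop, aeval (β n) P ≠ 0 := by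
  rw [← Nat.cofinite_eq_atTop]
  filter_upwards [hβ.tendsto_cofinite.eventually (P.rootSet A).toFinite.eventually_cofinite_notMem]
    with n hn
  exact fun h => hn (mem_rootSet.mpr ⟨hP, h⟩)

end Polynomial

namespace Height

variable {K : Type*} [Field K] [AdmissibleAbsValues K]

lemma logHeight₁_natCast_le (n : ℕ) : logHeight₁ (n : K) ≤ totalWeight K * log n := by
  simpa using logHeight₁_sum_le (Finset.range n) (fun _ => (1 : K))

lemma logHeight₁_intCast_le (n : ℤ) : logHeight₁ (n : K) ≤ totalWeight K * log |n| := by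
  rcases Int.natAbs_eq n with h | h <;> rw [h] <;> simpa using logHeight₁_natCast_le n.natAbs

lemma logHeight₁_aeval_le (P : ℤ[X]) (x : K) :
    logHeight₁ (aeval x P) ≤
      totalWeight K * P.liouvilleConst + P.natDegree * (P.natDegree + 1) * logHeight₁ x := by
  have hterm : ∀ i ∈ Finset.range (P.natDegree + 1), logHeight₁ (P.coeff i • x ^ i) ≤
      totalWeight K * log |P.coeff i| + P.natDegree * logHeight₁ x := by
    intro i hi
    have hid : (i : ℝ) ≤ P.natDegree := by exact_mod_cast Finset.mem_range_succ_iff.mp hi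
    calc logHeight₁ (P.coeff i • x ^ i)
        ≤ logHeight₁ (P.coeff i : K) + logHeight₁ (x ^ i) := by
          rw [zsmul_eq_mul]; exact logHeight₁_mul_le _ _
      _ ≤ totalWeight K * log |P.coeff i| + P.natDegree * logHeight₁ x := by
          rw [logHeight₁_pow]
          gcongr
          exact_mod_cast logHeight₁_intCast_le _
  rw [aeval_eq_sum_range]
  refine (logHeight₁_sum_le _ _).trans ?_
  grw [Finset.sum_le_sum hterm]
  rw [Finset.sum_add_distrib, Finset.sum_const, Finset.card_range, ← Finset.mul_sum,
    Polynomial.liouvilleConst]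
  push_cast
  apply le_of_eq
  ring

end Height

open IntermediateField in
theorem exp_neg_le_norm_aeval (P : ℤ[X]) {α : ℂ} (hα : IsAlgebraic ℚ α) (hP : aeval α P ≠ 0) :
    exp (-(minpoly ℚ α).natDegree *
        (P.liouvilleConst + P.natDegree * (P.natDegree + 1) * height α)) ≤ ‖aeval α P‖ := by
  have : FiniteDimensional ℚ ℚ⟮α⟯ := adjoin.finiteDimensional hα.isIntegral
  have : NumberField ℚ⟮α⟯ := ⟨⟩
  have hn : (Module.finrank ℚ ℚ⟮α⟯ : ℝ) = (minpoly ℚ α).natDegree := by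
    exact_mod_cast adjoin.finrank hα.isIntegral
  have hn0 : (Module.finrank ℚ ℚ⟮α⟯ : ℝ) ≠ 0 := by exact_mod_cast Module.finrank_pos.ne'
  have hval : (ℚ⟮α⟯).val (aeval (AdjoinSimple.gen ℚ α) P) = aeval α P :=
    (aeval_algHom_apply (ℚ⟮α⟯).val.toRingHom.toIntAlgHom _ P).symm
  have hz : aeval (AdjoinSimple.gen ℚ α) P ≠ 0 := fun h => hP (by rw [← hval, h, map_zero])
  have hlow := (NumberField.InfinitePlace.mk (ℚ⟮α⟯).val.toRingHom).exp_neg_logHeight₁_le hz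
  rw [NumberField.InfinitePlace.apply] at hlow
  refine le_trans ?_ (hval ▸ hlow)
  rw [exp_le_exp, neg_mul, neg_le_neg_iff]
  refine (logHeight₁_aeval_le P _).trans (le_of_eq ?_)
  rw [NumberField.totalWeight_eq_finrank, height_eq_logHeight₁_div_finrank hα, ← hn]
  field_simp

theorem exists_nhds_exp_neg_le_norm_sub (P : ℤ[X]) {γ : ℂ} (hPγ : aeval γ P = 0) :
    ∃ C : ℝ, ∃ t ∈ 𝓝 γ, ∀ β ∈ t, IsAlgebraic ℚ β → aeval β P ≠ 0 →
      exp (-(minpoly ℚ β).natDegree *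
        (P.liouvilleConst + P.natDegree * (P.natDegree + 1) * height β)) ≤ exp C * ‖β - γ‖ := by
  obtain ⟨L, t, ht, hLip⟩ :=
    (Polynomial.hasStrictDerivAt_aeval P γ).hasStrictFDerivAt.exists_lipschitzOnWith
  refine ⟨L, t, ht, fun β hβt hβ hPβ => ?_⟩
  calc _ ≤ ‖aeval β P‖ := exp_neg_le_norm_aeval P hβ hPβ
    _ = dist (aeval β P) (aeval γ P) := by rw [hPγ, dist_zero_right]
    _ ≤ L * dist β γ := hLip.dist_le_mul β hβt γ (mem_of_mem_nhds ht)
    _ ≤ exp L * ‖β - γ‖ := by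
      rw [dist_eq_norm]
      gcongr
      linarith [add_one_le_exp (L : ℝ)]

lemma tendsto_nhds_of_norm_sub_le_exp_neg {ι E : Type*} [SeminormedAddCommGroup E] {l : Filter ι}
    {f : ι → E} {a : E} {u : ι → ℝ} (hu : Tendsto u l atTop) (h : ∀ i, ‖a - f i‖ ≤ exp (-u i)) :
    Tendsto f l (𝓝 a) :=
  tendsto_iff_norm_sub_tendsto_zero.mpr <|
    squeeze_zero (fun _ => norm_nonneg _) (fun i => (norm_sub_rev _ _).trans_le (h i))
      (tendsto_exp_atBot.comp (tendsto_neg_atTop_atBot.comp hu))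

theorem transcendental_of_approximations_general (γ : ℂ) (m : ℕ) (β : ℕ → ℂ)
    (halg : ∀ n, IsAlgebraic ℚ (β n)) (hdeg : ∀ n, (minpoly ℚ (β n)).natDegree = m)
    (hinj : Function.Injective β)
    (w : ℕ → ℝ) (hw : Filter.Tendsto w Filter.atTop Filter.atTop)
    (hH : Filter.Tendsto (fun n => height (β n)) Filter.atTop Filter.atTop)
    (happrox : ∀ n, ‖γ - β n‖ ≤ Real.exp (-(w n) * height (β n))) :
    Transcendental ℚ γ := by
  intro hγ
  obtain ⟨P, hP0, hPγ⟩ := (IsFractionRing.isAlgebraic_iff ℤ ℚ ℂ).mpr hγ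
  obtain ⟨C, t, ht, hliouville⟩ := exists_nhds_exp_neg_le_norm_sub P hPγ
  set A := P.liouvilleConst
  set B : ℝ := P.natDegree * (P.natDegree + 1)
  have hβγ : Tendsto β atTop (𝓝 γ) :=
    tendsto_nhds_of_norm_sub_le_exp_neg (hw.atTop_mul_atTop₀ hH)
      fun n => (happrox n).trans_eq (by rw [neg_mul])
  have hbound : ∀ᶠ n in atTop, (w n - m * B) * height (β n) ≤ C + m * A := by
    filter_upwards [Polynomial.eventually_aeval_ne_zero hP0 hinj, hβγ.eventually ht]
      with n hPβ hβt
    have h := (hliouville (β n) hβt (halg n) hPβ).trans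
      (mul_le_mul_of_nonneg_left ((norm_sub_rev _ _).trans_le (happrox n)) (exp_pos C).le)
    rw [hdeg n, ← exp_add, exp_le_exp] at h
    linarith
  have hgrow : Tendsto (fun n => (w n - m * B) * height (β n)) atTop atTop :=
    (tendsto_atTop_add_const_right _ _ hw).atTop_mul_atTop₀ hH
  obtain ⟨n, hle, hgt⟩ := (hbound.and (hgrow.eventually_gt_atTop (C + m * A))).exists
  exact hle.not_gt hgt

/-- A complex number admitting very good approximations by infinitely many
distinct algebraic numbers of degree `m`, together with a Liouville-type lower
bound against all algebraic numbers of smaller degree, is transcendental. -/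
theorem transcendental_of_approximations (γ : ℂ) (m : ℕ) (β : ℕ → ℂ)
    (halg : ∀ n, IsAlgebraic ℚ (β n)) (hdeg : ∀ n, (minpoly ℚ (β n)).natDegree = m)
    (hinj : Function.Injective β)
    (w : ℕ → ℝ) (hw : Filter.Tendsto w Filter.atTop Filter.atTop)
    (hH : Filter.Tendsto (fun n => height (β n)) Filter.atTop Filter.atTop)
    (happrox : ∀ n, ‖γ - β n‖ ≤ Real.exp (-(w n) * height (β n)))
    (c η : ℝ) (hc : 0 < c) (hη : 0 < η)
    (hlow : ∀ β' : ℂ, IsAlgebraic ℚ β' → (minpoly ℚ β').natDegree < m →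
      ‖γ - β'‖ ≥ c * Real.exp (-η * height β')) :
    Transcendental ℚ γ :=
  transcendental_of_approximations_general γ m β halg hdeg hinj w hw hH happrox
end
end
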